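/- A point x_M corresponding to a representation M is χ_{(Θ,σ)}-semistable if and only if for every filtration 0 ⊂ M₁ ⊂ ... ⊂ M_{t+1} = M by subrepresentations and every choice of weights Γ₁ < ... < Γ_{t+1}, one has Σ_{i=1}^{t+1} Γ_i[Θ(M)σ(M^i) − σ(M)Θ(M^i)] ≤ 0. Moreover, this filtration criterion is equivalent to the slope criterion: for every nonzero proper subrepresentation M' ⊂ M, Θ(M')/σ(M') ≤ Θ(M)/σ(M). -/

import Mathlib

open Finset

/-- A subrepresentation of a fixed representation `M` of a quiver with vertex set `V`,
arrow set `E`, source/target maps `src tgt : E → V` and structure maps `f`. -/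
structure Subrep {k V E : Type} [Field k] (M : V → Type) [∀ v, AddCommGroup (M v)]
    [∀ v, Module k (M v)] (src tgt : E → V) (f : ∀ e, M (src e) →ₗ[k] M (tgt e)) : Type where
  N : ∀ v, Submodule k (M v)
  compat : ∀ e, (N (src e)).map (f e) ≤ N (tgt e)

namespace Subrep

variable {k V E : Type} [Field k] [Fintype V] {M : V → Type}
  [∀ v, AddCommGroup (M v)] [∀ v, Module k (M v)] [∀ v, FiniteDimensional k (M v)]
  {src tgt : E → V} {f : ∀ e, M (src e) →ₗ[k] M (tgt e)}

instance : PartialOrder (Subrep M src tgt f) :=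
  PartialOrder.lift Subrep.N (fun A B h => by cases A; cases B; simpa using h)

/-- The zero subrepresentation. -/
def bot : Subrep M src tgt f := ⟨fun _ => ⊥, fun e => by simp⟩

/-- The whole representation `M` as a subrepresentation of itself. -/
def top : Subrep M src tgt f := ⟨fun _ => ⊤, fun e => le_top⟩

/-- Sum of two subrepresentations. -/
def sup (A B : Subrep M src tgt f) : Subrep M src tgt f :=
  ⟨fun v => A.N v ⊔ B.N v, fun e => by
    rw [Submodule.map_sup]
    exact sup_le_sup (A.compat e) (B.compat e)⟩

/-- `tot c A = ∑_v c_v · dim A_v`; gives `Θ(A)` resp. `σ(A)` for `c = Θ` resp. `σ`. -/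
noncomputable def tot (c : V → ℤ) (A : Subrep M src tgt f) : ℤ :=
  ∑ v, c v * (Module.finrank k (A.N v) : ℤ)

/-- The slope `μ(A) = Θ(A)/σ(A)` as a rational number. -/
noncomputable def slope (Θ σ : V → ℤ) (A : Subrep M src tgt f) : ℚ :=
  (tot Θ A : ℚ) / (tot σ A : ℚ)

/-- The slope of the quotient `B/A` for `A ≤ B`. -/
noncomputable def quotSlope (Θ σ : V → ℤ) (A B : Subrep M src tgt f) : ℚ :=
  ((tot Θ B - tot Θ A : ℤ) : ℚ) / ((tot σ B - tot σ A : ℤ) : ℚ)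

/-- `(Θ,σ)`-semistability of the subrepresentation `A`, viewed as a representation itself:
every nonzero proper subrepresentation of `A` has slope at most `μ(A)`. -/
def Semistable (Θ σ : V → ℤ) (A : Subrep M src tgt f) : Prop :=
  ∀ B : Subrep M src tgt f, B ≤ A → B ≠ bot → B ≠ A → slope Θ σ B ≤ slope Θ σ A

/-- `(Θ,σ)`-semistability of the quotient representation `B/A`, expressed via the
correspondence between subrepresentations of `B/A` and subrepresentations `P` with
`A ≤ P ≤ B`. -/
def QuotSemistable (Θ σ : V → ℤ) (A B : Subrep M src tgt f) : Prop :=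
  ∀ P : Subrep M src tgt f, A ≤ P → P ≤ B → P ≠ A → quotSlope Θ σ A P ≤ quotSlope Θ σ A B

/-- `F` (indexed by `ℕ`, constant equal to `⊤` from `n+1` on) is a Harder–Narasimhan
filtration `0 = F 0 ⊂ F 1 ⊂ ⋯ ⊂ F (n+1) = M` : successive quotients have strictly
decreasing slopes and are `(Θ,σ)`-semistable. -/
def IsHNFiltration (Θ σ : V → ℤ) (n : ℕ) (F : ℕ → Subrep M src tgt f) : Prop :=
  F 0 = bot ∧ (∀ i, n + 1 ≤ i → F i = top) ∧
  (∀ i ≤ n, F i < F (i+1)) ∧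
  (∀ i, i + 1 ≤ n → quotSlope Θ σ (F (i+1)) (F (i+2)) < quotSlope Θ σ (F i) (F (i+1))) ∧
  (∀ i ≤ n, QuotSemistable Θ σ (F i) (F (i+1)))

end Subrep

/-!
Both criteria are statements about `g(A) = Θ(M)σ(A) − σ(M)Θ(A)` (`slopeGap`), which vanishes
at `0` and at `M`. Abel summation turns the filtration sum into `−∑ (Γ_{i+1} − Γ_i) g(M^{i+1})`, so `g ≥ 0` on
proper subrepresentations gives the filtration criterion; conversely, the one-step filtration
`0 ⊂ A ⊂ M` with weights `0 < 1` has sum `−g(A)`.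
-/

theorem Finset.sum_range_mul_sub_nonpos {R : Type*} [CommRing R] [PartialOrder R]
    [IsOrderedRing R] {Γ h : ℕ → R} {n : ℕ} (h_zero : h 0 = 0) (h_succ : h (n + 1) = 0)
    (hΓ : ∀ i < n, Γ i ≤ Γ (i + 1)) (hh : ∀ i < n, 0 ≤ h (i + 1)) :
    ∑ i ∈ range (n + 1), Γ i * (h (i + 1) - h i) ≤ 0 := by
  have abel := sum_range_by_parts Γ (fun i => h (i + 1) - h i) (n + 1)
  simp only [smul_eq_mul, sum_range_sub, h_zero, h_succ, sub_zero, add_tsub_cancel_right,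
    mul_zero, zero_sub] at abel
  rw [abel, neg_nonpos]
  exact sum_nonneg fun i hi =>
    mul_nonneg (sub_nonneg.2 (hΓ i (mem_range.1 hi))) (hh i (mem_range.1 hi))

namespace Subrep

variable {k V E : Type} [Field k] {M : V → Type} [∀ v, AddCommGroup (M v)]
  [∀ v, Module k (M v)] {src tgt : E → V} {f : ∀ e, M (src e) →ₗ[k] M (tgt e)}

theorem bot_le (A : Subrep M src tgt f) : bot ≤ A := fun _ => _root_.bot_le

theorem le_top (A : Subrep M src tgt f) : A ≤ top := fun _ => _root_.le_top

variable [Fintype V]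

theorem tot_bot (c : V → ℤ) : tot c (bot : Subrep M src tgt f) = 0 :=
  sum_eq_zero fun v _ => by
    rw [show (bot : Subrep M src tgt f).N v = ⊥ from rfl, finrank_bot, Nat.cast_zero, mul_zero]

theorem tot_pos [∀ v, FiniteDimensional k (M v)] {σ : V → ℤ} (hσ : ∀ v, 0 < σ v)
    {A : Subrep M src tgt f} (hA : A ≠ bot) : 0 < tot σ A := by
  obtain ⟨v, hv⟩ : ∃ v, A.N v ≠ ⊥ := by
    by_contra! h
    exact hA (le_antisymm (fun v => (h v).le) (bot_le A))
  have : Nontrivial (A.N v) := Submodule.nontrivial_iff_ne_bot.mpr hv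
  refine sum_pos' (fun w _ => mul_nonneg (hσ w).le (by positivity)) ⟨v, mem_univ v, ?_⟩
  exact mul_pos (hσ v) (by exact_mod_cast Module.finrank_pos)

/-- `σ(A) σ(M) (μ(M) - μ(A))`, cleared of denominators. -/
noncomputable def slopeGap (Θ σ : V → ℤ) (A : Subrep M src tgt f) : ℤ :=
  tot Θ (top : Subrep M src tgt f) * tot σ A - tot σ (top : Subrep M src tgt f) * tot Θ A

theorem slopeGap_bot (Θ σ : V → ℤ) : slopeGap Θ σ (bot : Subrep M src tgt f) = 0 := by
  simp [slopeGap, tot_bot]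

theorem slopeGap_top (Θ σ : V → ℤ) : slopeGap Θ σ (top : Subrep M src tgt f) = 0 := by
  rw [slopeGap, mul_comm, sub_self]

theorem slope_le_slope_top_iff [∀ v, FiniteDimensional k (M v)] {Θ σ : V → ℤ}
    (hσ : ∀ v, 0 < σ v) {A : Subrep M src tgt f} (hA : A ≠ bot) :
    slope Θ σ A ≤ slope Θ σ (top : Subrep M src tgt f) ↔ 0 ≤ slopeGap Θ σ A := by
  have htop : (top : Subrep M src tgt f) ≠ bot :=
    fun h => hA (le_antisymm (h ▸ le_top A) (bot_le A))
  have hA' : (0 : ℚ) < tot σ A := by exact_mod_cast tot_pos hσ hA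
  have htop' : (0 : ℚ) < tot σ (top : Subrep M src tgt f) := by exact_mod_cast tot_pos hσ htop
  rw [slope, slope, div_le_div_iff₀ hA' htop', slopeGap, sub_nonneg, ← Int.cast_le (R := ℚ)]
  push_cast
  constructor <;> intro h <;> linarith

end Subrep

open Subrep in
/-- Hilbert–Mumford criterion for quiver representations: the filtration criterion
(for every filtration `0 = F 0 ⊂ ⋯ ⊂ F (n+1) = M` by subrepresentations and increasing
weights `Γ`, `∑_i Γ_i[Θ(M)σ(M^i) − σ(M)Θ(M^i)] ≤ 0`) is equivalent to the slope
criterion (`Θ(A)/σ(A) ≤ Θ(M)/σ(M)` for every nonzero proper subrepresentation `A`). -/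
theorem hilbert_mumford_criterion {k V E : Type} [Field k] [Fintype V] {M : V → Type}
    [∀ v, AddCommGroup (M v)] [∀ v, Module k (M v)] [∀ v, FiniteDimensional k (M v)]
    {src tgt : E → V} {f : ∀ e, M (src e) →ₗ[k] M (tgt e)}
    (Θ σ : V → ℤ) (hσ : ∀ v, 0 < σ v) :
    ((∀ (n : ℕ) (F : ℕ → Subrep M src tgt f) (Γ : ℕ → ℚ),
        F 0 = bot → F (n + 1) = top →
        (∀ i ≤ n, F i < F (i + 1)) → (∀ i ≤ n, Γ i < Γ (i + 1)) →
        ∑ i ∈ Finset.range (n + 1), Γ i *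
          ((tot Θ (top : Subrep M src tgt f) : ℚ) * ((tot σ (F (i+1)) : ℚ) - (tot σ (F i) : ℚ))
            - (tot σ (top : Subrep M src tgt f) : ℚ) *
              ((tot Θ (F (i+1)) : ℚ) - (tot Θ (F i) : ℚ))) ≤ 0) ↔
      (∀ A : Subrep M src tgt f, A ≠ bot → A ≠ top →
        slope Θ σ A ≤ slope Θ σ (top : Subrep M src tgt f))) := by
  have h_sum (n : ℕ) (F : ℕ → Subrep M src tgt f) (Γ : ℕ → ℚ) :
      ∑ i ∈ range (n + 1), Γ i *
          ((tot Θ (top : Subrep M src tgt f) : ℚ) * ((tot σ (F (i+1)) : ℚ) - (tot σ (F i) : ℚ))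
            - (tot σ (top : Subrep M src tgt f) : ℚ) *
              ((tot Θ (F (i+1)) : ℚ) - (tot Θ (F i) : ℚ))) =
        ∑ i ∈ range (n + 1), Γ i *
          ((slopeGap Θ σ (F (i + 1)) : ℚ) - (slopeGap Θ σ (F i) : ℚ)) :=
    sum_congr rfl fun i _ => by simp only [slopeGap]; push_cast; ring
  simp only [h_sum]
  constructor
  · intro h_filt A hA_bot hA_top
    rw [slope_le_slope_top_iff hσ hA_bot]
    have := h_filt 1 (fun i => if i = 0 then bot else if i = 1 then A else top) (fun i => i)
      rfl rfl (by
        intro i hi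
        interval_cases i
        exacts [lt_of_le_of_ne (bot_le A) (Ne.symm hA_bot), lt_of_le_of_ne (le_top A) hA_top])
      (fun i _ => by push_cast; linarith)
    simpa [sum_range_succ, slopeGap_top] using this
  · intro h_slope n F Γ hF_zero hF_succ hF hΓ
    have hF_mono : StrictMonoOn F (Set.Iic (n + 1)) :=
      strictMonoOn_Iic_of_lt_succ fun i hi => hF i (Nat.lt_succ_iff.1 hi)
    refine sum_range_mul_sub_nonpos (h := fun i => (slopeGap Θ σ (F i) : ℚ))
      (by simp only [hF_zero, slopeGap_bot, Int.cast_zero])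
      (by simp only [hF_succ, slopeGap_top, Int.cast_zero]) (fun i hi => (hΓ i hi.le).le)
      fun i hi => ?_
    have hF_bot : bot < F (i + 1) :=
      hF_zero ▸ hF_mono (Set.mem_Iic.2 (by omega)) (Set.mem_Iic.2 (by omega)) (by omega)
    have hF_top : F (i + 1) < top :=
      hF_succ ▸ hF_mono (Set.mem_Iic.2 (by omega)) Set.self_mem_Iic (by omega)
    exact_mod_cast (slope_le_slope_top_iff hσ hF_bot.ne').1 (h_slope _ hF_bot.ne' hF_top.ne)
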